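/- Let A = (α₁,…,α_m) be a list of exponent vectors in {0,1,2}^𝒫 and Σ = (σ₁,…,σ_n) a list of sign conditions whose realizations over a semi-algebraic set S partition S. Let Mat(A,Σ) be the m×n matrix with entries σ_j^{α_i}. Then Mat(A,Σ) · (χ^gen(σ₁,S), …, χ^gen(σ_n,S))ᵀ = (EQ(𝒫^{α₁},S), …, EQ(𝒫^{α_m},S))ᵀ, where EQ(Q,S) = χ^gen({Q>0} ∩ S) − χ^gen({Q<0} ∩ S). -/
import Mathlib

/-- Let `A = (α₁, …, α_m)` be exponent vectors in `{0,1,2}^Ps` and `Σ = (σ₁, …, σ_n)` sign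
conditions whose realizations over a semi-algebraic set `S` partition `S`. Then, row by row,
`Mat(A,Σ) · (χ(σ₁,S), …, χ(σ_n,S))ᵀ = (EQ(Ps^{α₁},S), …, EQ(Ps^{α_m},S))ᵀ`, where
`Mat(A,Σ)_{i,j} = σ_j^{α_i}` and `EQ(Q,S) = χ({Q>0} ∩ S) - χ({Q<0} ∩ S)`; `χ` is any
additive valuation (the generalized Euler–Poincaré characteristic). -/
theorem stmt13 (k m n : ℕ) (Ps : Finset (MvPolynomial (Fin k) ℝ))
    (χ : Set (Fin k → ℝ) → ℤ)
    (hadd : ∀ A B : Set (Fin k → ℝ), Disjoint A B → χ (A ∪ B) = χ A + χ B)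
    (hempty : χ ∅ = 0)
    (α : Fin m → MvPolynomial (Fin k) ℝ → ℕ) (hα : ∀ i, ∀ p ∈ Ps, α i p ≤ 2)
    (σ : Fin n → MvPolynomial (Fin k) ℝ → SignType)
    (S : Set (Fin k → ℝ))
    (hcover : S = ⋃ j : Fin n,
      {x ∈ S | ∀ p ∈ Ps, SignType.sign (MvPolynomial.eval x p) = σ j p})
    (hdisj : Pairwise fun j j' : Fin n =>
      Disjoint {x ∈ S | ∀ p ∈ Ps, SignType.sign (MvPolynomial.eval x p) = σ j p}
        {x ∈ S | ∀ p ∈ Ps, SignType.sign (MvPolynomial.eval x p) = σ j' p})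
    (i : Fin m) :
    ∑ j : Fin n, ((∏ p ∈ Ps, (σ j p) ^ α i p : SignType) : ℤ) *
        χ {x ∈ S | ∀ p ∈ Ps, SignType.sign (MvPolynomial.eval x p) = σ j p}
      = χ {x ∈ S | 0 < MvPolynomial.eval x (∏ p ∈ Ps, p ^ α i p)}
        - χ {x ∈ S | MvPolynomial.eval x (∏ p ∈ Ps, p ^ α i p) < 0} := by
  classical
  set R : Fin n → Set (Fin k → ℝ) := fun j =>
    {x ∈ S | ∀ p ∈ Ps, SignType.sign (MvPolynomial.eval x p) = σ j p} with hR
  set s : Fin n → SignType := fun j => ∏ p ∈ Ps, (σ j p) ^ α i p with hs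
  have key : ∀ (t : Finset (Fin n)), χ (⋃ j ∈ t, R j) = ∑ j ∈ t, χ (R j) := by
    intro t
    induction t using Finset.induction with
    | empty => simpa using hempty
    | @insert a t' hj ih =>
      rw [Finset.set_biUnion_insert, hadd, ih, Finset.sum_insert hj]
      exact Set.disjoint_iUnion₂_right.mpr fun b hb => hdisj (fun h => hj (h ▸ hb))
  have hsign : ∀ j, ∀ x ∈ R j,
      SignType.sign (MvPolynomial.eval x (∏ p ∈ Ps, p ^ α i p)) = s j := by
    intro j x hx
    simp only [map_prod, map_pow]
    rw [show SignType.sign (∏ p ∈ Ps, MvPolynomial.eval x p ^ α i p)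
        = ∏ p ∈ Ps, SignType.sign (MvPolynomial.eval x p ^ α i p) from
      map_prod signHom _ _]
    exact Finset.prod_congr rfl fun p hp => by rw [sign_pow, hx.2 p hp]
  have hmem : ∀ x ∈ S, ∃ j, x ∈ R j := by
    intro x hx
    have := hcover ▸ hx
    simpa [hR] using this
  have hpos : {x ∈ S | 0 < MvPolynomial.eval x (∏ p ∈ Ps, p ^ α i p)} =
      ⋃ j ∈ Finset.univ.filter (fun j => s j = 1), R j := by
    ext x
    simp only [Set.mem_setOf_eq, Set.mem_iUnion, Finset.mem_filter, Finset.mem_univ, true_and,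
      exists_prop]
    constructor
    · rintro ⟨hxS, hxpos⟩
      obtain ⟨j, hj⟩ := hmem x hxS
      exact ⟨j, by rw [← hsign j x hj, sign_pos hxpos], hj⟩
    · rintro ⟨j, hsj, hj⟩
      refine ⟨hj.1, ?_⟩
      have h := hsign j x hj
      rw [hsj] at h
      exact sign_eq_one_iff.mp h
  have hneg : {x ∈ S | MvPolynomial.eval x (∏ p ∈ Ps, p ^ α i p) < 0} =
      ⋃ j ∈ Finset.univ.filter (fun j => s j = -1), R j := by
    ext x
    simp only [Set.mem_setOf_eq, Set.mem_iUnion, Finset.mem_filter, Finset.mem_univ, true_and,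
      exists_prop]
    constructor
    · rintro ⟨hxS, hxneg⟩
      obtain ⟨j, hj⟩ := hmem x hxS
      exact ⟨j, by rw [← hsign j x hj, sign_neg hxneg], hj⟩
    · rintro ⟨j, hsj, hj⟩
      refine ⟨hj.1, ?_⟩
      have h := hsign j x hj
      rw [hsj] at h
      exact sign_eq_neg_one_iff.mp h
  rw [hpos, hneg, key, key, Finset.sum_filter, Finset.sum_filter,
    ← Finset.sum_sub_distrib]
  refine Finset.sum_congr rfl fun j _ => ?_
  show (s j : ℤ) * χ (R j) = _
  cases hsj : s j <;> simp [hsj]
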